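/- The composition product is compatible with the mixed composition product: for all noncommutative formal power series e, c over X = {x0, x1} and every pair d = (d1, d2) of formal power series, e ∘ (c ∘̃ d) = (e ∘ c) ∘̃ d, where ∘ is the composition product and ∘̃ is the mixed composition product. -/

import Mathlib

/-- Words over the alphabet X = {x₀, x₁}, encoded as lists of booleans
(`false` ↔ x₀, `true` ↔ x₁). -/
abbrev Word : Type := List Bool

/-- Noncommutative formal power series over X with real coefficients. -/
abbrev Series : Type := Word → ℝ

/-- Auxiliary recursion computing the coefficient of the shuffle product. -/
def sh : Word → Series → Series → ℝ
  | [], c, d => c [] * d []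
  | a :: w, c, d => sh w (fun u => c (a :: u)) d + sh w c (fun u => d (a :: u))

/-- The shuffle product of two series. -/
def shuffle (c d : Series) : Series := fun w => sh w c d

/-- Left concatenation by the letter x₀. -/
def X0f (c : Series) : Series := fun w =>
  match w with
  | false :: w' => c w'
  | _ => 0

/-- Left concatenation by the letter x₁. -/
def X1f (c : Series) : Series := fun w =>
  match w with
  | true :: w' => c w'
  | _ => 0

/-- The indicator series of a word. -/
def deltaW (η : Word) : Series := fun w => if w = η then 1 else 0

/-- The shuffle unit 1∅. -/
def oneS : Series := deltaW []

/-- Mixed composition product of a word with a pair of series: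
∅ ∘̃ z = ∅, (x₀η) ∘̃ z = x₀(η ∘̃ z),
(x₁η) ∘̃ z = x₁(z₁ ⧢ (η ∘̃ z)) + x₀(z₂ ⧢ (η ∘̃ z)). -/
def wmix : Word → Series × Series → Series
  | [], _ => oneS
  | false :: η, z => X0f (wmix η z)
  | true :: η, z => X1f (shuffle z.1 (wmix η z)) + X0f (shuffle z.2 (wmix η z))

/-- Mixed composition product `c ∘̃ z`, extended linearly in the left argument.
(Since `wmix η z` vanishes on words shorter than `η`, the sum may be truncated.) -/
def mixcomp (c : Series) (z : Series × Series) : Series := fun w =>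
  ∑ n ∈ Finset.range (w.length + 1), ∑ f : Fin n → Bool,
    c (List.ofFn f) * wmix (List.ofFn f) z w

/-- Composition product of a word with a series:
∅ ∘ d = ∅, (x₀η) ∘ d = x₀(η ∘ d), (x₁η) ∘ d = x₀(d ⧢ (η ∘ d)). -/
def wcomp : Word → Series → Series
  | [], _ => oneS
  | false :: η, d => X0f (wcomp η d)
  | true :: η, d => X0f (shuffle d (wcomp η d))

/-- Composition product `c ∘ d`, extended linearly in the left argument. -/
def compP (c d : Series) : Series := fun w =>
  ∑ n ∈ Finset.range (w.length + 1), ∑ f : Fin n → Bool,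
    c (List.ofFn f) * wcomp (List.ofFn f) d w

/-- The group product on G: (c₁,c₂)·(d₁,d₂) = (c₁ ⧢ d₁, c₂ + c₁ ⧢ d₂). -/
def gmul (c d : Series × Series) : Series × Series :=
  (shuffle c.1 d.1, c.2 + shuffle c.1 d.2)

/-- The identity element e = (1∅, 0) of G. -/
def geId : Series × Series := (oneS, 0)

/-- Shuffle powers. -/
def shPow (c : Series) : ℕ → Series
  | 0 => oneS
  | n + 1 => shuffle c (shPow c n)

/-- Shuffle inverse of a series with constant coefficient 1, via the
geometric series c^{⧢ -1} = Σ_k (1∅ - c)^{⧢ k} (truncated by word length,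
which is exact since 1∅ - c is proper). -/
def shInv (c : Series) : Series := fun w =>
  ∑ k ∈ Finset.range (w.length + 1), shPow (oneS - c) k w

/-- The group inverse in (G,·). -/
def ginv (c : Series × Series) : Series × Series :=
  (shInv c.1, -(shuffle (shInv c.1) c.2))

/-- The product ◁ on G, componentwise mixed composition. -/
def triOp (c d : Series × Series) : Series × Series :=
  (mixcomp c.1 d, mixcomp c.2 d)

/-- The Grossman–Larson product c ⋆ d = (c ◁ d) · d. -/
def starOp (c d : Series × Series) : Series × Series := gmul (triOp c d) d

/-!
The mixed composition `c ↦ c ∘̃ d` is determined by the constant term `(c ∘̃ d)(∅) = c(∅)` and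
the recursions `x₁⁻¹(c ∘̃ d) = d₁ ⧢ (x₁⁻¹c ∘̃ d)` and
`x₀⁻¹(c ∘̃ d) = x₀⁻¹c ∘̃ d + d₂ ⧢ (x₁⁻¹c ∘̃ d)` for the left quotients `xᵢ⁻¹`. Since `xᵢ⁻¹` is a
derivation of the shuffle product, these recursions show by induction on word length that `∘̃ d`
is a shuffle homomorphism, and it visibly commutes with `x₀`. Induction on `η` then gives
`η ∘ (c ∘̃ d) = (η ∘ c) ∘̃ d` for every word `η`, and the theorem follows by linearity: the sums
defining both sides are finite coefficientwise because `η ∘ c` and `η ∘̃ d` vanish on words shorter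
than `η`.
-/

open Finset Set

def wordsUpTo (N : ℕ) : Finset Word :=
  ((range (N + 1)).sigma fun n => (univ : Finset (Fin n → Bool))).map
    List.equivSigmaTuple.symm.toEmbedding

@[simp]
lemma mem_wordsUpTo {N : ℕ} {v : Word} : v ∈ wordsUpTo N ↔ v.length ≤ N := by
  constructor
  · intro h
    obtain ⟨⟨n, f⟩, hf, rfl⟩ := Finset.mem_map.mp h
    simpa [List.equivSigmaTuple, Nat.lt_succ_iff] using hf
  · intro h
    refine Finset.mem_map.mpr ⟨List.equivSigmaTuple v, ?_, by simp⟩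
    simpa [List.equivSigmaTuple, Nat.lt_succ_iff] using h

lemma sum_wordsUpTo {M : Type*} [AddCommMonoid M] (N : ℕ) (F : Word → M) :
    ∑ v ∈ wordsUpTo N, F v = ∑ n ∈ range (N + 1), ∑ f : Fin n → Bool, F (List.ofFn f) := by
  rw [wordsUpTo, sum_map, sum_sigma]
  rfl

lemma wordsUpTo_succ (N : ℕ) :
    wordsUpTo (N + 1) =
      insert [] ((wordsUpTo N).map ⟨List.cons false, List.cons_injective⟩ ∪
        (wordsUpTo N).map ⟨List.cons true, List.cons_injective⟩) := by
  ext (_ | ⟨a, v⟩) <;> [simp; cases a <;> simp]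

lemma sum_wordsUpTo_succ {M : Type*} [AddCommMonoid M] (N : ℕ) (F : Word → M) :
    ∑ v ∈ wordsUpTo (N + 1), F v =
      F [] + (∑ v ∈ wordsUpTo N, F (false :: v) + ∑ v ∈ wordsUpTo N, F (true :: v)) := by
  rw [wordsUpTo_succ, sum_insert (by simp), sum_union, sum_map, sum_map]
  · rfl
  · simp [Finset.disjoint_left]

def leftShift (a : Bool) (c : Series) : Series := fun u => c (a :: u)

@[simp] lemma leftShift_apply (a : Bool) (c : Series) (u : Word) :
    leftShift a c u = c (a :: u) := rfl

lemma leftShift_add (a : Bool) (c c' : Series) :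
    leftShift a (c + c') = leftShift a c + leftShift a c' := rfl

lemma leftShift_smul (a : Bool) (r : ℝ) (c : Series) : leftShift a (r • c) = r • leftShift a c :=
  rfl

@[simp] lemma leftShift_zero (a : Bool) : leftShift a 0 = 0 := rfl

lemma Series.ext_leftShift {f g : Series} (h₀ : f [] = g [])
    (h : ∀ a, leftShift a f = leftShift a g) : f = g := by
  funext w
  cases w with
  | nil => exact h₀
  | cons a u => exact congrFun (h a) u

lemma eqOn_succ_of_leftShift {f g : Series} {n : ℕ} (h₀ : f [] = g [])
    (h : ∀ a, EqOn (leftShift a f) (leftShift a g) {u | u.length < n}) :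
    EqOn f g {u : Word | u.length < n + 1} := by
  rintro (_ | ⟨a, u⟩) hu
  · exact h₀
  · exact h a (by simpa using hu)

lemma Set.EqOn.leftShift {f g : Series} {n : ℕ} (h : EqOn f g {u : Word | u.length < n + 1})
    (a : Bool) : EqOn (leftShift a f) (leftShift a g) {u | u.length < n} :=
  fun u hu => h (by simpa using hu)

@[simp] lemma shuffle_nil (c d : Series) : shuffle c d [] = c [] * d [] := rfl

lemma shuffle_cons (c d : Series) (a : Bool) (u : Word) :
    shuffle c d (a :: u) = shuffle (leftShift a c) d u + shuffle c (leftShift a d) u := rfl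

lemma leftShift_shuffle (a : Bool) (c d : Series) :
    leftShift a (shuffle c d) = shuffle (leftShift a c) d + shuffle c (leftShift a d) := rfl

lemma shuffle_comm (c d : Series) : shuffle c d = shuffle d c := by
  funext w
  induction w generalizing c d with
  | nil => exact mul_comm _ _
  | cons a u ih => rw [shuffle_cons, shuffle_cons, ih (leftShift a c), ih c, add_comm]

lemma shuffle_add_left (c c' d : Series) : shuffle (c + c') d = shuffle c d + shuffle c' d := by
  funext w
  induction w generalizing c c' d with
  | nil => exact add_mul _ _ _
  | cons a u ih =>
    simp only [Pi.add_apply] at ih ⊢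
    rw [shuffle_cons, shuffle_cons, shuffle_cons, leftShift_add, ih, ih]
    ring

lemma shuffle_smul_left (r : ℝ) (c d : Series) : shuffle (r • c) d = r • shuffle c d := by
  funext w
  induction w generalizing c d with
  | nil => exact mul_assoc _ _ _
  | cons a u ih =>
    simp only [Pi.smul_apply, smul_eq_mul] at ih ⊢
    rw [shuffle_cons, shuffle_cons, leftShift_smul, ih, ih]
    ring

lemma shuffle_add_right (c d d' : Series) : shuffle c (d + d') = shuffle c d + shuffle c d' := by
  rw [shuffle_comm, shuffle_add_left, shuffle_comm d, shuffle_comm d']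

lemma shuffle_smul_right (r : ℝ) (c d : Series) : shuffle c (r • d) = r • shuffle c d := by
  rw [shuffle_comm, shuffle_smul_left, shuffle_comm]

def shuffleBilin : Series →ₗ[ℝ] Series →ₗ[ℝ] Series :=
  LinearMap.mk₂ ℝ shuffle shuffle_add_left shuffle_smul_left shuffle_add_right shuffle_smul_right

@[simp] lemma shuffleBilin_apply (c d : Series) : shuffleBilin c d = shuffle c d := rfl

@[simp] lemma shuffle_zero (c : Series) : shuffle c 0 = 0 := by
  simpa using (shuffleBilin c).map_zero

lemma shuffle_sum_smul_right {ι : Type*} (s : Finset ι) (c : Series) (r : ι → ℝ)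
    (F : ι → Series) : shuffle c (∑ i ∈ s, r i • F i) = ∑ i ∈ s, r i • shuffle c (F i) := by
  have h := map_sum (shuffleBilin c) (fun i => r i • F i) s
  simp only [map_smul, shuffleBilin_apply] at h
  exact h

lemma shuffle_assoc (b c d : Series) : shuffle (shuffle b c) d = shuffle b (shuffle c d) := by
  funext w
  induction w generalizing b c d with
  | nil => exact mul_assoc _ _ _
  | cons a u ih =>
    rw [shuffle_cons, shuffle_cons, leftShift_shuffle, leftShift_shuffle, shuffle_add_left,
      shuffle_add_right]
    simp only [Pi.add_apply, ih]
    ring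

lemma shuffle_left_comm (b c d : Series) :
    shuffle b (shuffle c d) = shuffle c (shuffle b d) := by
  rw [← shuffle_assoc, shuffle_comm b, shuffle_assoc]

lemma shuffle_congr {c c' d d' : Series} {n : ℕ} (hc : EqOn c c' {u : Word | u.length < n})
    (hd : EqOn d d' {u : Word | u.length < n}) :
    EqOn (shuffle c d) (shuffle c' d') {u | u.length < n} := by
  induction n generalizing c c' d d' with
  | zero => intro u hu; simp at hu
  | succ n ih =>
    have hmono : {u : Word | u.length < n} ⊆ {u | u.length < n + 1} :=
      fun _ hu => Nat.lt_succ_of_lt hu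
    refine eqOn_succ_of_leftShift ?_ fun a u hu => ?_
    · simp [hc (by simp : [] ∈ _), hd (by simp : [] ∈ _)]
    · simp only [leftShift_shuffle, Pi.add_apply]
      rw [ih (hc.leftShift a) (hd.mono hmono) hu, ih (hc.mono hmono) (hd.leftShift a) hu]

lemma shuffle_eqOn_zero (c : Series) {d : Series} {n : ℕ}
    (hd : EqOn d 0 {u : Word | u.length < n}) : EqOn (shuffle c d) 0 {u | u.length < n} := by
  simpa using shuffle_congr (eqOn_refl c _) hd

@[simp] lemma X0f_nil (c : Series) : X0f c [] = 0 := rfl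
@[simp] lemma leftShift_false_X0f (c : Series) : leftShift false (X0f c) = c := rfl
@[simp] lemma leftShift_true_X0f (c : Series) : leftShift true (X0f c) = 0 := rfl
@[simp] lemma leftShift_false_X1f (c : Series) : leftShift false (X1f c) = 0 := rfl
@[simp] lemma leftShift_true_X1f (c : Series) : leftShift true (X1f c) = c := rfl

lemma X0f_eqOn_zero {c : Series} {n : ℕ} (hc : EqOn c 0 {u : Word | u.length < n}) :
    EqOn (X0f c) 0 {u | u.length < n + 1} :=
  eqOn_succ_of_leftShift rfl fun a => by cases a <;> simp [hc, eqOn_refl]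

lemma X1f_eqOn_zero {c : Series} {n : ℕ} (hc : EqOn c 0 {u : Word | u.length < n}) :
    EqOn (X1f c) 0 {u | u.length < n + 1} :=
  eqOn_succ_of_leftShift rfl fun a => by cases a <;> simp [hc, eqOn_refl]

lemma wmix_eqOn_zero (η : Word) (z : Series × Series) :
    EqOn (wmix η z) 0 {w | w.length < η.length} := by
  induction η with
  | nil => intro w hw; simp at hw
  | cons a η ih =>
    cases a
    · exact X0f_eqOn_zero ih
    · intro w hw
      simp [wmix, X1f_eqOn_zero (shuffle_eqOn_zero z.1 ih) hw,
        X0f_eqOn_zero (shuffle_eqOn_zero z.2 ih) hw]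

lemma wcomp_eqOn_zero (η : Word) (c : Series) :
    EqOn (wcomp η c) 0 {w | w.length < η.length} := by
  induction η with
  | nil => intro w hw; simp at hw
  | cons a η ih =>
    cases a
    · exact X0f_eqOn_zero ih
    · exact X0f_eqOn_zero (shuffle_eqOn_zero c ih)

section LinearExtension

variable (c : Series) (Φ : Word → Series)

def linearExtension : Series := fun w =>
  ∑ n ∈ range (w.length + 1), ∑ f : Fin n → Bool, c (List.ofFn f) * Φ (List.ofFn f) w

lemma linearExtension_apply (w : Word) :
    linearExtension c Φ w = ∑ v ∈ wordsUpTo w.length, c v * Φ v w :=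
  (sum_wordsUpTo w.length fun v => c v * Φ v w).symm

lemma linearExtension_add (c' : Series) :
    linearExtension (c + c') Φ = linearExtension c Φ + linearExtension c' Φ := by
  funext w
  simp only [linearExtension_apply, Pi.add_apply, add_mul, sum_add_distrib]

lemma linearExtension_zero : linearExtension 0 Φ = 0 := by
  funext w
  simp [linearExtension_apply]

variable {Φ} (hΦ : ∀ v, EqOn (Φ v) 0 {w | w.length < v.length})
include hΦ

lemma linearExtension_apply_of_le {w : Word} {N : ℕ} (hw : w.length ≤ N) :
    linearExtension c Φ w = ∑ v ∈ wordsUpTo N, c v * Φ v w := by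
  rw [linearExtension_apply]
  refine sum_subset (fun v hv => by simp at hv ⊢; omega) fun v _ hv => ?_
  rw [hΦ v (by simpa using hv), Pi.zero_apply, mul_zero]

lemma eqOn_linearExtension (N : ℕ) :
    EqOn (linearExtension c Φ) (∑ v ∈ wordsUpTo N, c v • Φ v) {w | w.length < N + 1} :=
  fun w hw => by
    simp [linearExtension_apply_of_le c hΦ (Nat.lt_succ_iff.mp hw), Finset.sum_apply]

lemma shuffle_linearExtension_apply (d : Series) (u : Word) :
    shuffle d (linearExtension c Φ) u = ∑ v ∈ wordsUpTo u.length, c v * shuffle d (Φ v) u := by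
  rw [shuffle_congr (eqOn_refl d _) (eqOn_linearExtension c hΦ u.length) (by simp),
    shuffle_sum_smul_right, Finset.sum_apply]
  rfl

lemma linearExtension_linearExtension (Ψ : Word → Series) :
    linearExtension (linearExtension c Φ) Ψ =
      linearExtension c fun v => linearExtension (Φ v) Ψ := by
  funext w
  calc linearExtension (linearExtension c Φ) Ψ w
      = ∑ u ∈ wordsUpTo w.length, (∑ v ∈ wordsUpTo w.length, c v * Φ v u) * Ψ u w := by
        rw [linearExtension_apply]
        refine sum_congr rfl fun u hu => ?_
        rw [linearExtension_apply_of_le c hΦ (mem_wordsUpTo.mp hu)]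
    _ = ∑ v ∈ wordsUpTo w.length, c v * ∑ u ∈ wordsUpTo w.length, Φ v u * Ψ u w := by
        simp only [sum_mul, mul_sum, mul_assoc]
        exact sum_comm
    _ = linearExtension c (fun v => linearExtension (Φ v) Ψ) w := by
        simp only [linearExtension_apply]

end LinearExtension

lemma mixcomp_eq_linearExtension (c : Series) (d : Series × Series) :
    mixcomp c d = linearExtension c fun v => wmix v d := rfl

lemma compP_eq_linearExtension (c d : Series) :
    compP c d = linearExtension c fun v => wcomp v d := rfl

section MixedComposition

variable (d : Series × Series)

lemma mixcomp_apply_nil (c : Series) : mixcomp c d [] = c [] := by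
  simp [mixcomp, wmix, oneS, deltaW]

lemma mixcomp_apply_cons (c : Series) (a : Bool) (u : Word) :
    mixcomp c d (a :: u) = ∑ v ∈ wordsUpTo u.length,
      (c (false :: v) * wmix (false :: v) d (a :: u) +
        c (true :: v) * wmix (true :: v) d (a :: u)) := by
  rw [mixcomp_eq_linearExtension, linearExtension_apply, List.length_cons, sum_wordsUpTo_succ,
    sum_add_distrib]
  simp [wmix, oneS, deltaW]

lemma leftShift_true_mixcomp (c : Series) :
    leftShift true (mixcomp c d) = shuffle d.1 (mixcomp (leftShift true c) d) := by
  funext u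
  rw [mixcomp_eq_linearExtension (leftShift true c) d,
    shuffle_linearExtension_apply _ (wmix_eqOn_zero · d), leftShift_apply, mixcomp_apply_cons]
  simp [wmix, X0f, X1f]

lemma leftShift_false_mixcomp (c : Series) :
    leftShift false (mixcomp c d) =
      mixcomp (leftShift false c) d + shuffle d.2 (mixcomp (leftShift true c) d) := by
  funext u
  rw [Pi.add_apply, mixcomp_eq_linearExtension (leftShift true c) d,
    shuffle_linearExtension_apply _ (wmix_eqOn_zero · d),
    mixcomp_eq_linearExtension (leftShift false c) d, linearExtension_apply, leftShift_apply,
    mixcomp_apply_cons, sum_add_distrib]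
  simp [wmix, X0f, X1f]

lemma mixcomp_add (c c' : Series) : mixcomp (c + c') d = mixcomp c d + mixcomp c' d :=
  linearExtension_add c (fun v => wmix v d) c'

@[simp] lemma mixcomp_zero : mixcomp 0 d = 0 := linearExtension_zero fun v => wmix v d

lemma mixcomp_X0f (c : Series) : mixcomp (X0f c) d = X0f (mixcomp c d) :=
  Series.ext_leftShift (by simp [mixcomp_apply_nil]) fun a => by
    cases a <;> simp [leftShift_false_mixcomp, leftShift_true_mixcomp]

lemma mixcomp_oneS : mixcomp oneS d = oneS := by
  have h : ∀ a, leftShift a oneS = 0 := fun a => by funext u; simp [oneS, deltaW]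
  exact Series.ext_leftShift (mixcomp_apply_nil d oneS) fun a => by
    cases a <;> simp [leftShift_false_mixcomp, leftShift_true_mixcomp, h]

lemma leftShift_true_shuffle_mixcomp (a b : Series) :
    leftShift true (shuffle (mixcomp a d) (mixcomp b d)) =
      shuffle d.1 (shuffle (mixcomp (leftShift true a) d) (mixcomp b d) +
        shuffle (mixcomp a d) (mixcomp (leftShift true b) d)) := by
  rw [leftShift_shuffle, leftShift_true_mixcomp, leftShift_true_mixcomp, shuffle_assoc,
    shuffle_left_comm (mixcomp a d), shuffle_add_right]

lemma leftShift_false_shuffle_mixcomp (a b : Series) :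
    leftShift false (shuffle (mixcomp a d) (mixcomp b d)) =
      (shuffle (mixcomp (leftShift false a) d) (mixcomp b d) +
        shuffle (mixcomp a d) (mixcomp (leftShift false b) d)) +
      shuffle d.2 (shuffle (mixcomp (leftShift true a) d) (mixcomp b d) +
        shuffle (mixcomp a d) (mixcomp (leftShift true b) d)) := by
  simp only [leftShift_shuffle, leftShift_false_mixcomp, shuffle_add_left, shuffle_add_right,
    shuffle_assoc, shuffle_left_comm d.2]
  abel

theorem mixcomp_shuffle (a b : Series) :
    mixcomp (shuffle a b) d = shuffle (mixcomp a d) (mixcomp b d) := by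
  suffices h : ∀ n (a b : Series), EqOn (mixcomp (shuffle a b) d)
      (shuffle (mixcomp a d) (mixcomp b d)) {u | u.length < n} from
    funext fun w => h (w.length + 1) a b (Nat.lt_succ_self _)
  intro n
  induction n with
  | zero => intro a b u hu; simp at hu
  | succ n ih =>
    intro a b
    have hshift : ∀ x, EqOn (mixcomp (leftShift x (shuffle a b)) d)
        (shuffle (mixcomp (leftShift x a) d) (mixcomp b d) +
          shuffle (mixcomp a d) (mixcomp (leftShift x b) d)) {u | u.length < n} := fun x => by
      rw [leftShift_shuffle, mixcomp_add]
      exact (ih _ _).comp_left₂ (op := (· + ·)) (ih _ _)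
    refine eqOn_succ_of_leftShift (by simp [mixcomp_apply_nil]) fun x => ?_
    cases x
    · rw [leftShift_false_shuffle_mixcomp, leftShift_false_mixcomp]
      exact (hshift false).comp_left₂ (op := (· + ·))
        (shuffle_congr (eqOn_refl _ _) (hshift true))
    · rw [leftShift_true_shuffle_mixcomp, leftShift_true_mixcomp]
      exact shuffle_congr (eqOn_refl _ _) (hshift true)

lemma wcomp_mixcomp (η : Word) (c : Series) :
    wcomp η (mixcomp c d) = mixcomp (wcomp η c) d := by
  induction η with
  | nil => exact (mixcomp_oneS d).symm
  | cons a η ih =>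
    cases a
    · simp only [wcomp, ih, mixcomp_X0f]
    · simp only [wcomp, ih, mixcomp_X0f, mixcomp_shuffle]

end MixedComposition

/-- e ∘ (c ∘̃ d) = (e ∘ c) ∘̃ d. -/
theorem comp_mixcomp_assoc (e c : Series) (d : Series × Series) :
    compP e (mixcomp c d) = mixcomp (compP e c) d :=
  calc compP e (mixcomp c d)
      = linearExtension e fun v => linearExtension (wcomp v c) fun u => wmix u d := by
        simp only [compP_eq_linearExtension, wcomp_mixcomp]
        simp only [mixcomp_eq_linearExtension]
    _ = linearExtension (linearExtension e fun v => wcomp v c) fun u => wmix u d :=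
        (linearExtension_linearExtension e (wcomp_eqOn_zero · c) _).symm
    _ = mixcomp (compP e c) d := by
        rw [mixcomp_eq_linearExtension, compP_eq_linearExtension]
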